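/- If G is a finite simple graph that is neither edgeless nor complete, then vs_χ(G) + vs_χ(Ḡ) ≤ n(G) + 1, where Ḡ is the complement of G and n(G) is the number of vertices of G. -/

import Mathlib

open SimpleGraph

/-- The chromatic number of a graph, as a natural number (for finite graphs this
is the usual chromatic number). -/
noncomputable def chromNum {V : Type*} (G : SimpleGraph V) : ℕ :=
  sInf {n : ℕ | G.Colorable n}

/-- The maximum degree Δ(G) of a finite graph. -/
noncomputable def maxDeg {V : Type*} [Fintype V] (G : SimpleGraph V) : ℕ :=
  Finset.univ.sup fun v => Nat.card (G.neighborSet v)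

/-- The chromatic vertex stability number: the minimum number of vertices whose
deletion results in a graph with chromatic number χ(G) − 1. -/
noncomputable def vsChi {V : Type*} [Fintype V] (G : SimpleGraph V) : ℕ :=
  sInf {k : ℕ | ∃ S : Finset V, S.card = k ∧
    chromNum (G.induce ((S : Set V))ᶜ) = chromNum G - 1}

/-- The independent chromatic vertex stability number: the minimum size of an
independent set of vertices whose deletion results in a graph with chromatic
number χ(G) − 1. -/
noncomputable def ivsChi {V : Type*} [Fintype V] (G : SimpleGraph V) : ℕ :=
  sInf {k : ℕ | ∃ S : Finset V, S.card = k ∧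
    (∀ u ∈ S, ∀ v ∈ S, ¬ G.Adj u v) ∧
    chromNum (G.induce ((S : Set V))ᶜ) = chromNum G - 1}

/-- The chromatic edge stability number: the minimum number of edges whose
deletion results in a graph with chromatic number χ(G) − 1. -/
noncomputable def esChi {V : Type*} (G : SimpleGraph V) : ℕ :=
  sInf {k : ℕ | ∃ F : Finset (Sym2 V), ↑F ⊆ G.edgeSet ∧ F.card = k ∧
    chromNum (G.deleteEdges ↑F) = chromNum G - 1}

/-!
Let `S` be a colour class of a `χ(G)`-colouring of `G` and `T` one of a `χ(Ḡ)`-colouring of `Ḡ`.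
Deleting a colour class lowers the chromatic number by exactly one, so `vs_χ(G) ≤ |S|` and
`vs_χ(Ḡ) ≤ |T|`. The other `χ(G) - 1` colours are still needed on the `n - |S|` remaining
vertices, so `|S| ≤ n + 1 - χ(G)`; and `T` is a clique of `G`, so `|T| ≤ χ(G)`.
-/

namespace SimpleGraph

variable {V : Type*} {G : SimpleGraph V}

theorem chromNum_le_of_colorable {n : ℕ} (h : G.Colorable n) : chromNum G ≤ n :=
  Nat.sInf_le h

theorem chromNum_colorable [Finite V] (G : SimpleGraph V) : G.Colorable (chromNum G) :=
  have := Fintype.ofFinite V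
  Nat.sInf_mem (s := {n | G.Colorable n}) ⟨_, G.colorable_of_fintype⟩

theorem Colorable.of_induce_compl {s : Set V} (hs : G.IsIndepSet s) {k : ℕ}
    (h : (G.induce sᶜ).Colorable k) : G.Colorable (k + 1) := by
  classical
  obtain ⟨C⟩ := h
  let D : G.Coloring (Option (Fin k)) := Coloring.mk
    (fun v => if hv : v ∈ s then none else some (C ⟨v, hv⟩))
    (fun {u v} huv => by
      by_cases hu : u ∈ s <;> by_cases hv : v ∈ s
      · exact absurd huv (hs hu hv (G.ne_of_adj huv))
      all_goals simp only [hu, hv, dite_true, dite_false, ne_eq, reduceCtorEq,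
        not_false_eq_true, Option.some.injEq]
      exact C.valid (by simpa using huv))
  simpa using D.colorable

theorem chromNum_le_chromNum_induce_compl_add_one [Finite V] {s : Set V} (hs : G.IsIndepSet s) :
    chromNum G ≤ chromNum (G.induce sᶜ) + 1 :=
  chromNum_le_of_colorable (.of_induce_compl hs (chromNum_colorable _))

theorem Coloring.colorable_induce_compl_colorClass {α : Type*} [Fintype α] (C : G.Coloring α)
    (c : α) : (G.induce (C.colorClass c)ᶜ).Colorable (Fintype.card α - 1) := by
  classical
  let D : (G.induce (C.colorClass c)ᶜ).Coloring {x // x ≠ c} :=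
    Coloring.mk (fun v => ⟨C v, v.2⟩) (fun huv h => C.valid huv (congrArg Subtype.val h))
  simpa [Fintype.card_subtype_compl] using D.colorable

variable [Fintype V]

theorem IsIndepSet.card_add_chromNum_le {s : Finset V} (hs : G.IsIndepSet s) :
    s.card + chromNum G ≤ Fintype.card V + 1 := by
  classical
  have hrest : chromNum (G.induce (s : Set V)ᶜ) ≤ Fintype.card V - s.card := by
    simpa [Finset.filter_not, Finset.card_univ_sdiff] using
      chromNum_le_of_colorable (G.induce (s : Set V)ᶜ).colorable_of_fintype
  have := chromNum_le_chromNum_induce_compl_add_one hs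
  have := s.card_le_univ
  omega

theorem vsChi_le_card_of_isIndepSet {s : Finset V} (hs : G.IsIndepSet s)
    (hrest : (G.induce (s : Set V)ᶜ).Colorable (chromNum G - 1)) : vsChi G ≤ s.card := by
  refine Nat.sInf_le ⟨s, rfl, le_antisymm (chromNum_le_of_colorable hrest) ?_⟩
  have := chromNum_le_chromNum_induce_compl_add_one hs
  omega

theorem exists_isIndepSet_vsChi_le_card (G : SimpleGraph V) :
    ∃ s : Finset V, G.IsIndepSet s ∧ vsChi G ≤ s.card := by
  classical
  rcases isEmpty_or_nonempty V with hV | hV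
  -- no colour class exists, but then `chromNum G - 1 = 0 - 1 = 0` and deleting nothing works
  · exact ⟨∅, by simp, vsChi_le_card_of_isIndepSet (by simp) (.of_isEmpty _)⟩
  obtain ⟨v⟩ := hV
  obtain ⟨C⟩ := chromNum_colorable G
  refine ⟨(C.colorClass (C v)).toFinset, ?indep, vsChi_le_card_of_isIndepSet ?indep ?_⟩ <;>
    rw [Set.coe_toFinset]
  · exact C.isIndepSet_colorClass _
  · simpa using C.colorable_induce_compl_colorClass (C v)

end SimpleGraph

theorem stmt_7_general {V : Type*} [Fintype V] (G : SimpleGraph V) :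
    vsChi G + vsChi Gᶜ ≤ Fintype.card V + 1 := by
  obtain ⟨s, hs, hvs⟩ := exists_isIndepSet_vsChi_le_card G
  obtain ⟨t, ht, hvt⟩ := exists_isIndepSet_vsChi_le_card Gᶜ
  have hs_card := hs.card_add_chromNum_le
  have ht_card : t.card ≤ chromNum G :=
    ((isIndepSet_compl G).1 ht).card_le_of_colorable (chromNum_colorable G)
  omega

/-- Nordhaus-Gaddum type result: if $G$ is neither edgeless nor complete, then
$vs_χ(G) + vs_χ(\bar G) ≤ n(G) + 1$. -/
theorem stmt_7 {V : Type*} [Fintype V] (G : SimpleGraph V)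
    (hbot : G ≠ ⊥) (htop : G ≠ ⊤) :
    vsChi G + vsChi Gᶜ ≤ Fintype.card V + 1 :=
  stmt_7_general G
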